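/- (Stateless UTxO theorem, equivalence part) If B;txs;tx is a valid blockchain and B;tx is a valid blockchain, then B;tx;txs and B;txs;tx are observationally equivalent (have the same set of unspent outputs). -/

import Mathlib

/-- Idealised EUTxO: positions, redeemers, datums are naturals; values are
multisets of chips (pairs of naturals), modelled as functions to ℕ. -/
abbrev Position := ℕ
abbrev Redeemer := ℕ
abbrev Datum := ℕ
abbrev Value := ℕ × ℕ → ℕ

/-- An input is a pair of a position and a redeemer. -/
structure Input where
  pos : Position
  redeemer : Redeemer

/-- An output is a tuple (position, validator, datum, value).  Since validators
are sets of tuples mentioning contexts (which mention outputs), we break the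
type-level recursion by abstracting the type `V` of validators together with a
validation relation `val : V → Redeemer → Datum → Value → Context V → Prop`. -/
structure Output (V : Type) where
  pos : Position
  validator : V
  datum : Datum
  value : Value

/-- A transaction is a (finite) set of inputs and a (finite) set of outputs. -/
structure Tx (V : Type) where
  inputs : List Input
  outputs : List (Output V)

/-- A context is a transaction pointed at one of its inputs. -/
structure Context (V : Type) where
  tx : Tx V
  point : Input

variable {V : Type}

/-- All outputs appearing in a sequence of transactions. -/
def outputsOf (B : List (Tx V)) : List (Output V) := B.flatMap Tx.outputs

/-- A sequence of transactions is a valid blockchain when: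
(1) distinct outputs appearing in it have distinct positions;
(2) every input points to (has the position of) a unique output in a strictly
    earlier transaction;
(3) each pointing input satisfies the validator of the output it points to. -/
def Valid (val : V → Redeemer → Datum → Value → Context V → Prop)
    (B : List (Tx V)) : Prop :=
  (outputsOf B).Pairwise (fun o o' => o.pos ≠ o'.pos) ∧
  (∀ n (hn : n < B.length), ∀ i ∈ B[n].inputs,
    ∃! o : Output V, o ∈ outputsOf (B.take n) ∧ o.pos = i.pos) ∧
  (∀ n (hn : n < B.length), ∀ i ∈ B[n].inputs, ∀ o ∈ outputsOf (B.take n),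
    o.pos = i.pos →
    val o.validator i.redeemer o.datum o.value ⟨B[n], i⟩)

/-- The unspent outputs of a sequence of transactions: outputs to which no
input of a strictly later transaction points. -/
def UTxO (B : List (Tx V)) : Set (Output V) :=
  { o | ∃ m, ∃ hm : m < B.length, o ∈ B[m].outputs ∧
        ∀ n, ∀ hn : n < B.length, m < n → ∀ i ∈ B[n].inputs, i.pos ≠ o.pos }

/-- A transaction mentions a position when it occurs in one of its inputs or
outputs. -/
def Mentions (tx : Tx V) (p : Position) : Prop :=
  (∃ i ∈ tx.inputs, i.pos = p) ∨ (∃ o ∈ tx.outputs, o.pos = p)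

/-- Two transactions are apart when they mention disjoint sets of positions. -/
def Apart (tx tx' : Tx V) : Prop := ∀ p, Mentions tx p → ¬ Mentions tx' p

/-! An input of a valid chain spends an output of a strictly earlier transaction, and output
positions are distinct, so no input spends an output of its own or of a later transaction.
Under that condition an output is unspent iff no input of the whole chain has its position,
which depends only on the multiset of transactions. It therefore suffices that `B;tx;txs` also
spends only backward: the only new pairs are `tx` before the transactions of `txs`, and the
inputs of `tx` spend outputs of `B`, whose positions differ from those of `txs`. -/

def Spends (t t' : Tx V) : Prop :=
  ∃ i ∈ t.inputs, ∃ o ∈ t'.outputs, i.pos = o.pos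

def SpendsOnlyEarlier (L : List (Tx V)) : Prop :=
  (∀ t ∈ L, ¬ Spends t t) ∧ L.Pairwise (fun t t' => ¬ Spends t t')

theorem outputsOf_append (L M : List (Tx V)) :
    outputsOf (L ++ M) = outputsOf L ++ outputsOf M :=
  List.flatMap_append

theorem mem_outputsOf {L : List (Tx V)} {o : Output V} :
    o ∈ outputsOf L ↔ ∃ t ∈ L, o ∈ t.outputs :=
  List.mem_flatMap

theorem mem_UTxO_iff {L : List (Tx V)} (hL : SpendsOnlyEarlier L) {o : Output V} :
    o ∈ UTxO L ↔ o ∈ outputsOf L ∧ ∀ t ∈ L, ∀ i ∈ t.inputs, i.pos ≠ o.pos := by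
  constructor
  · rintro ⟨m, hm, ho, hlater⟩
    refine ⟨mem_outputsOf.2 ⟨_, List.getElem_mem hm, ho⟩, fun t ht i hi hpos => ?_⟩
    obtain ⟨n, hn, rfl⟩ := List.getElem_of_mem ht
    rcases lt_trichotomy m n with hmn | rfl | hnm
    · exact hlater n hn hmn i hi hpos
    · exact hL.1 _ ht ⟨i, hi, o, ho, hpos⟩
    · exact List.pairwise_iff_getElem.1 hL.2 n m hn hm hnm ⟨i, hi, o, ho, hpos⟩
  · rintro ⟨ho, hunspent⟩
    obtain ⟨t, ht, hot⟩ := mem_outputsOf.1 ho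
    obtain ⟨m, hm, rfl⟩ := List.getElem_of_mem ht
    exact ⟨m, hm, hot, fun n hn _ i hi => hunspent _ (List.getElem_mem hn) i hi⟩

theorem UTxO_eq_of_perm {L L' : List (Tx V)} (hL : SpendsOnlyEarlier L)
    (hL' : SpendsOnlyEarlier L') (hp : L.Perm L') : UTxO L = UTxO L' := by
  ext o
  simp only [mem_UTxO_iff hL, mem_UTxO_iff hL', mem_outputsOf, hp.mem_iff]

section Valid

variable {val : V → Redeemer → Datum → Value → Context V → Prop}

theorem Valid.not_spends {L : List (Tx V)} (hL : Valid val L) {n m : ℕ} (hn : n < L.length)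
    (hm : m < L.length) (hnm : n ≤ m) : ¬ Spends L[n] L[m] := by
  rintro ⟨i, hi, o, ho, hpos⟩
  obtain ⟨o', ⟨ho', hpos'⟩, -⟩ := hL.2.1 n hn i hi
  have hm_drop : L[m] ∈ L.drop n :=
    List.mem_drop_iff_getElem.2 ⟨m - n, by omega, by simp only [Nat.add_sub_cancel' hnm]⟩
  have hdistinct := hL.1
  rw [← L.take_append_drop n, outputsOf_append] at hdistinct
  exact (List.pairwise_append.1 hdistinct).2.2 o' ho' o (mem_outputsOf.2 ⟨_, hm_drop, ho⟩)
    (hpos'.trans hpos)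

theorem Valid.spendsOnlyEarlier {L : List (Tx V)} (hL : Valid val L) : SpendsOnlyEarlier L := by
  refine ⟨fun t ht => ?_, List.pairwise_iff_getElem.2 fun n m hn hm hnm =>
    hL.not_spends hn hm hnm.le⟩
  obtain ⟨n, hn, rfl⟩ := List.getElem_of_mem ht
  exact hL.not_spends hn hn le_rfl

theorem Valid.exists_spent_of_mem_inputs {B : List (Tx V)} {tx : Tx V}
    (h : Valid val (B ++ [tx])) {i : Input} (hi : i ∈ tx.inputs) :
    ∃ o ∈ outputsOf B, o.pos = i.pos := by
  obtain ⟨o, ho, -⟩ := h.2.1 B.length (by simp) i (by simpa using hi)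
  exact ⟨o, by simpa using ho⟩

theorem spendsOnlyEarlier_of_valid {B txs : List (Tx V)} {tx : Tx V}
    (h1 : Valid val (B ++ txs ++ [tx])) (h2 : Valid val (B ++ [tx])) :
    SpendsOnlyEarlier (B ++ [tx] ++ txs) := by
  have htx : ∀ t ∈ txs, ¬ Spends tx t := by
    rintro t ht ⟨i, hi, o, ho, hpos⟩
    obtain ⟨o', ho', hpos'⟩ := h2.exists_spent_of_mem_inputs hi
    have hdistinct := h1.1
    rw [outputsOf_append, outputsOf_append, List.pairwise_append, List.pairwise_append] at hdistinct
    exact hdistinct.1.2.2 o' ho' o (mem_outputsOf.2 ⟨t, ht, ho⟩) (hpos'.trans hpos)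
  obtain ⟨hself, hpair⟩ := h1.spendsOnlyEarlier
  simp only [List.pairwise_append, List.pairwise_singleton, List.mem_append,
    List.mem_singleton] at hself hpair
  simp only [SpendsOnlyEarlier, List.pairwise_append, List.pairwise_singleton, List.mem_append,
    List.mem_singleton]
  grind

end Valid

/-- Stateless UTxO theorem, equivalence part: if `B;txs;tx` and `B;tx` are
valid blockchains then `B;tx;txs` and `B;txs;tx` are observationally
equivalent. -/
theorem utxo_commute (val : V → Redeemer → Datum → Value → Context V → Prop)
    (B txs : List (Tx V)) (tx : Tx V)
    (h1 : Valid val (B ++ txs ++ [tx])) (h2 : Valid val (B ++ [tx])) :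
    UTxO (B ++ [tx] ++ txs) = UTxO (B ++ txs ++ [tx]) := by
  have hperm : (B ++ [tx] ++ txs).Perm (B ++ txs ++ [tx]) := by
    simpa only [List.append_assoc] using List.perm_append_comm.append_left B
  exact UTxO_eq_of_perm (spendsOnlyEarlier_of_valid h1 h2) h1.spendsOnlyEarlier hperm
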